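/- arXiv:2509.22896 — 4 statements merged into one kernel-verified Lean document; each statement's English description precedes it below -/
import Mathlib

section
/- Let F²_X and F²_Y be the integrated CDFs of discrete random variables X and Y supported on [a,b]. If the function Γ(t) = F²_Y(t) - F²_X(t) satisfies Γ(y_i) ≥ 0 for every value y_i of Y with y_i ≤ r, then Γ(t) ≥ 0 for all t ∈ [a, r], provided additionally that Γ is nonneg at r (i.e., when r is itself one of the y_i). Formally: if Y takes values y_1 ≤ ... ≤ y_n, r = y_j for some j, and F²_Y(y_i) ≥ F²_X(y_i) for all i with y_i ≤ r, then F²_Y(t) ≥ F²_X(t) for all t ∈ [a, r]. -/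
/-!
Between two consecutive values of `Y` the function `F²_Y` is affine while `F²_X` is convex, so
`F²_Y - F²_X` is concave there and is nonnegative as soon as it is nonnegative at both ends.
Every `t ∈ [a, r]` lies in such an interval whose right end is a value `y_i ≤ r` and whose left
end is either such a value or `a`, where `F²_X` vanishes because `X ≥ a`.
-/

open Finset Set

theorem ConvexOn.le_on_segment_of_concaveOn {𝕜 E β : Type*} [Semiring 𝕜] [PartialOrder 𝕜]
    [AddCommMonoid E] [SMul 𝕜 E] [AddCommGroup β] [LinearOrder β] [IsOrderedAddMonoid β]
    [Module 𝕜 β] [PosSMulStrictMono 𝕜 β] {s : Set E} {f g : E → β} (hf : ConvexOn 𝕜 s f)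
    (hg : ConcaveOn 𝕜 s g) {x y z : E} (hx : x ∈ s) (hy : y ∈ s) (hfgx : f x ≤ g x)
    (hfgy : f y ≤ g y) (hz : z ∈ segment 𝕜 x y) : f z ≤ g z :=
  sub_nonpos.1 <| ((hf.sub hg).le_on_segment hx hy hz).trans <|
    max_le (sub_nonpos.2 hfgx) (sub_nonpos.2 hfgy)

theorem exists_consecutive_values_around {ι α : Type*} [Fintype ι] [LinearOrder α] (y : ι → α)
    {a t : α} {j : ι} (hat : a ≤ t) (htj : t ≤ y j) :
    ∃ s u, s ≤ t ∧ t ≤ u ∧ (s = a ∨ ∃ k, y k = s ∧ s ≤ t) ∧ (∃ k, y k = u ∧ u ≤ y j) ∧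
      ∀ k, y k ∉ Ioo s u := by
  classical
  set lower := insert a ((univ.filter (y · ≤ t)).image y)
  set upper := (univ.filter (t ≤ y ·)).image y
  have hj : y j ∈ upper := mem_image_of_mem _ (by simpa)
  obtain ⟨s, hs_mem, hs_max⟩ : ∃ s ∈ lower, ∀ v ∈ lower, v ≤ s :=
    ⟨_, max'_mem _ (insert_nonempty _ _), fun _ => le_max' _ _⟩
  obtain ⟨u, hu_mem, hu_min⟩ : ∃ u ∈ upper, ∀ v ∈ upper, u ≤ v :=
    ⟨_, min'_mem _ ⟨_, hj⟩, fun _ => min'_le _ _⟩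
  have hs : s = a ∨ ∃ k, y k = s ∧ s ≤ t := by
    obtain rfl | ⟨k, hkt, rfl⟩ := by simpa [lower] using hs_mem
    exacts [Or.inl rfl, Or.inr ⟨k, rfl, hkt⟩]
  obtain ⟨k, hkt, rfl⟩ : ∃ k, t ≤ y k ∧ y k = u := by simpa [upper] using hu_mem
  refine ⟨s, y k, hs.elim (· ▸ hat) fun ⟨_, _, hst⟩ => hst, hkt, hs, ⟨k, rfl, hu_min _ hj⟩, ?_⟩
  exact fun i ⟨hsi, hik⟩ => (le_total (y i) t).elim
    (fun h => (hs_max _ (mem_insert_of_mem (mem_image_of_mem y (by simpa using h)))).not_gt hsi)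
    (fun h => (hu_min _ (mem_image_of_mem y (by simpa using h))).not_gt hik)

section

variable {ι : Type*} [Fintype ι]

noncomputable def integratedCdf (p z : ι → ℝ) (t : ℝ) : ℝ :=
  ∑ k, p k * max (t - z k) 0

variable {p z : ι → ℝ}

theorem convexOn_integratedCdf (hp : ∀ k, 0 ≤ p k) : ConvexOn ℝ univ (integratedCdf p z) := by
  have hterm : ∀ k, ConvexOn ℝ univ fun t => p k * max (t - z k) 0 := fun k =>
    (((convexOn_id convex_univ).add_const (-z k)).sup (convexOn_const 0 convex_univ)).smul (hp k)
      |>.congr fun t _ => by simp [sub_eq_add_neg]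
  have := sum_induction (s := univ) (fun k t => p k * max (t - z k) 0) (ConvexOn ℝ univ)
    (fun _ _ => ConvexOn.add) (convexOn_const 0 convex_univ) fun k _ => hterm k
  rwa [sum_fn] at this

theorem concaveOn_integratedCdf_Icc {s u : ℝ} (hp : ∀ k, 0 ≤ p k) (hgap : ∀ k, z k ∉ Ioo s u) :
    ConcaveOn ℝ (Icc s u) (integratedCdf p z) := by
  have hterm : ∀ k, ConcaveOn ℝ (Icc s u) fun t => p k * max (t - z k) 0 := by
    intro k
    refine ConcaveOn.smul (hp k) ?_ |>.congr fun t _ => smul_eq_mul ..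
    rcases le_or_gt (z k) s with hzs | hsz
    · exact ((concaveOn_id (convex_Icc s u)).add_const (-z k)).congr fun t ht => by
        simp [sub_eq_add_neg, hzs.trans ht.1]
    · have hzu : u ≤ z k := not_lt.1 fun h => hgap k ⟨hsz, h⟩
      exact (concaveOn_const 0 (convex_Icc s u)).congr fun t ht => by
        simp [ht.2.trans hzu]
  have := sum_induction (s := univ) (fun k t => p k * max (t - z k) 0)
    (ConcaveOn ℝ (Icc s u)) (fun _ _ => ConcaveOn.add) (concaveOn_const 0 (convex_Icc s u))
    fun k _ => hterm k
  rwa [sum_fn] at this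

theorem integratedCdf_eq_zero_of_le {t : ℝ} (h : ∀ k, t ≤ z k) : integratedCdf p z t = 0 :=
  sum_eq_zero fun k _ => by simp [h k]

theorem integratedCdf_nonneg (hp : ∀ k, 0 ≤ p k) (t : ℝ) : 0 ≤ integratedCdf p z t :=
  sum_nonneg fun k _ => mul_nonneg (hp k) (le_max_right _ _)

theorem integratedCdf_le_on_Icc_of_forall_notMem_Ioo {x y : ι → ℝ} {s u t : ℝ}
    (hp : ∀ k, 0 ≤ p k) (hs : integratedCdf p x s ≤ integratedCdf p y s)
    (hu : integratedCdf p x u ≤ integratedCdf p y u) (hgap : ∀ k, y k ∉ Ioo s u)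
    (ht : t ∈ Icc s u) : integratedCdf p x t ≤ integratedCdf p y t := by
  have hsu : s ≤ u := ht.1.trans ht.2
  have hconvex := (convexOn_integratedCdf (z := x) hp).subset (subset_univ _) (convex_Icc s u)
  refine hconvex.le_on_segment_of_concaveOn (concaveOn_integratedCdf_Icc hp hgap)
    (left_mem_Icc.2 hsu) (right_mem_Icc.2 hsu) hs hu ?_
  rwa [segment_eq_Icc hsu]

end

theorem stmt_3_general (n : ℕ) (p x y : Fin n → ℝ) (a b r : ℝ) (j : Fin n)
    (hp : ∀ i, 0 ≤ p i)
    (hx : ∀ i, x i ∈ Set.Icc a b) (hr : r = y j)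
    (hloss : ∀ i, y i ≤ r →
      (∑ k, p k * max (y i - x k) 0) ≤ ∑ k, p k * max (y i - y k) 0) :
    ∀ t ∈ Set.Icc a r,
      (∑ k, p k * max (t - x k) 0) ≤ ∑ k, p k * max (t - y k) 0 := by
  rintro t ⟨hat, htr⟩
  obtain ⟨s, u, hst, htu, hs, ⟨k, rfl, hku⟩, hgap⟩ :=
    exists_consecutive_values_around y hat (hr ▸ htr)
  refine integratedCdf_le_on_Icc_of_forall_notMem_Ioo hp ?_ (hloss k (hr ▸ hku)) hgap ⟨hst, htu⟩
  obtain rfl | ⟨i, rfl, hit⟩ := hs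
  · rw [integratedCdf_eq_zero_of_le fun k => (hx k).1]
    exact integratedCdf_nonneg hp _
  · exact hloss i (hit.trans htr)

/-- If Y takes sorted values y_1 ≤ ... ≤ y_n in [a,b], the reference
point r equals some y_j, and F²_Y(y_i) ≥ F²_X(y_i) for all i with y_i ≤ r,
then F²_Y(t) ≥ F²_X(t) for all t ∈ [a, r], where F²_Z(t) = Σ_i p_i max{t - z_i, 0}. -/
theorem stmt_3 (n : ℕ) (p x y : Fin n → ℝ) (a b r : ℝ) (j : Fin n)
    (hp : ∀ i, 0 ≤ p i) (hsum : ∑ i, p i = 1)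
    (hx : ∀ i, x i ∈ Set.Icc a b) (hy : ∀ i, y i ∈ Set.Icc a b)
    (hsorted : Monotone y) (hr : r = y j)
    (hloss : ∀ i, y i ≤ r →
      (∑ k, p k * max (y i - x k) 0) ≤ ∑ k, p k * max (y i - y k) 0) :
    ∀ t ∈ Set.Icc a r,
      (∑ k, p k * max (t - x k) 0) ≤ ∑ k, p k * max (t - y k) 0 :=
  stmt_3_general n p x y a b r j hp hx hr hloss
end

section
/- Linear-feasibility characterization of the loss-domain MSD condition: F²_X(y_i) ≤ F²_Y(y_i) for all i with y_i ≤ r holds if and only if there exists δ ∈ ℝ_+^{N⁻ × n} satisfying δ_{ik} ≥ y_i - x_k for all i ∈ N⁻, k ∈ {1,...,n}, and Σ_k p_k δ_{ik} ≤ F²_Y(y_i) for all i ∈ N⁻, where N⁻ = {i | y_i ≤ r}. -/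
/-- Lemma 2: The loss-domain MSD condition
F²_X(y_i) ≤ F²_Y(y_i) for all i with y_i ≤ r (where F²_Z(t) = Σ_k p_k max{t-z_k,0})
holds iff there exists a nonnegative matrix δ with δ_{ik} ≥ y_i - x_k for all
i ∈ N⁻ = {i | y_i ≤ r} and k, and Σ_k p_k δ_{ik} ≤ F²_Y(y_i) for all i ∈ N⁻. -/
theorem stmt_12 (n : ℕ) (p x y : Fin n → ℝ) (a b r : ℝ)
    (hp : ∀ i, 0 ≤ p i) (hsum : ∑ i, p i = 1)
    (hx : ∀ i, x i ∈ Set.Icc a b) (hy : ∀ i, y i ∈ Set.Icc a b) :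
    (∀ i, y i ≤ r →
        (∑ k, p k * max (y i - x k) 0) ≤ ∑ k, p k * max (y i - y k) 0)
    ↔
    (∃ δ : Fin n → Fin n → ℝ,
      ∀ i, y i ≤ r →
        (∀ k, 0 ≤ δ i k ∧ y i - x k ≤ δ i k) ∧
        (∑ k, p k * δ i k) ≤ ∑ k, p k * max (y i - y k) 0) := by
  constructor
  · intro h
    refine ⟨fun i k => max (y i - x k) 0, fun i hi => ⟨fun k => ⟨le_max_right _ _, le_max_left _ _⟩, h i hi⟩⟩
  · rintro ⟨δ, hδ⟩ i hi
    obtain ⟨h1, h2⟩ := hδ i hi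
    refine le_trans (Finset.sum_le_sum fun k _ => ?_) h2
    exact mul_le_mul_of_nonneg_left (max_le (h1 k).2 (h1 k).1) (hp k)
end

section
/- MSD is equivalent to preference by all reverse S-shaped utilities, in one direction: if X ⪰ Y (the integral conditions of Proposition 1 hold with reference point r), then for every non-decreasing function u: [a,b] → ℝ that is concave on [a,r] and convex on [r,b] and twice continuously differentiable on (a,r) and (r,b), we have E[u(X)] ≥ E[u(Y)]. -/
open MeasureTheory

/-- The CDF of a discrete random variable with values `x` and probabilities `p`. -/
noncomputable def cdf16 (n : ℕ) (p x : Fin n → ℝ) (t : ℝ) : ℝ :=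
  ∑ i ∈ Finset.univ.filter (fun i => x i ≤ t), p i

/-!
Since `t ↦ ∑ i, p i * max (t - x i) 0` is a right antiderivative of the CDF of `x`, the MSD
integrals are differences of expected hinge payoffs: `∫ a..c (F_Y - F_X) = E(c - Y)⁺ - E(c - X)⁺`
and `∫ c..b (F_Y - F_X) = E(X - c)⁺ - E(Y - c)⁺`. Write `u = u ∘ max r + u ∘ min r - u r`. On
the finitely many atoms, the convex nondecreasing part `u ∘ max r` agrees with a constant plus a
nonnegative combination of hinges `max (· - c) 0` with `c ∈ [r, b]` (add the atoms in increasing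
order, each time bending the last linear piece upwards), and each hinge is preferred by the gain
condition. The concave part reduces to this by the reflection `τ ↦ -τ`.
-/

open Set

lemma hasDerivWithinAt_max_sub_zero_Ioi (x τ : ℝ) :
    HasDerivWithinAt (fun t => max (t - x) 0) (if x ≤ τ then 1 else 0) (Ioi τ) τ := by
  split_ifs with h
  · refine ((hasDerivAt_id τ).sub_const x).hasDerivWithinAt.congr (fun t ht => ?_) ?_
    · exact max_eq_left (by linarith [mem_Ioi.1 ht])
    · exact max_eq_left (by linarith)
  · refine ((hasDerivAt_const τ (0 : ℝ)).congr_of_eventuallyEq ?_).hasDerivWithinAt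
    filter_upwards [Iio_mem_nhds (not_le.1 h)] with t ht
    exact max_eq_right (by linarith [mem_Iio.1 ht])

lemma cdf16_eq_sum (n : ℕ) (p x : Fin n → ℝ) (t : ℝ) :
    cdf16 n p x t = ∑ i, p i * if x i ≤ t then 1 else 0 := by
  simp only [cdf16, Finset.sum_filter, mul_ite, mul_one, mul_zero]

lemma intervalIntegrable_cdf16 (n : ℕ) (p x : Fin n → ℝ) (s t : ℝ) :
    IntervalIntegrable (cdf16 n p x) volume s t := by
  have hstep : ∀ i, Monotone fun τ : ℝ => if x i ≤ τ then (1 : ℝ) else 0 := fun i τ₁ τ₂ h => by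
    dsimp only
    split_ifs with h₁ h₂ <;> first | exact absurd (h₁.trans h) h₂ | norm_num
  simpa only [funext (cdf16_eq_sum n p x), Finset.sum_fn] using
    IntervalIntegrable.sum Finset.univ fun i _ => ((hstep i).intervalIntegrable).const_mul (p i)

theorem integral_cdf16 (n : ℕ) (p x : Fin n → ℝ) (s t : ℝ) :
    ∫ τ in s..t, cdf16 n p x τ =
      ∑ i, p i * max (t - x i) 0 - ∑ i, p i * max (s - x i) 0 := by
  refine intervalIntegral.integral_eq_sub_of_hasDeriv_right
    (f := fun t => ∑ i, p i * max (t - x i) 0) (Continuous.continuousOn (by fun_prop))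
    (fun τ _ => ?_) (intervalIntegrable_cdf16 n p x s t)
  rw [cdf16_eq_sum]
  exact HasDerivWithinAt.fun_sum fun i _ =>
    (hasDerivWithinAt_max_sub_zero_Ioi (x i) τ).const_mul (p i)

theorem integral_cdf16_of_le (n : ℕ) (p x : Fin n → ℝ) {a : ℝ} (hx : ∀ i, a ≤ x i) (t : ℝ) :
    ∫ τ in a..t, cdf16 n p x τ = ∑ i, p i * max (t - x i) 0 := by
  simp [integral_cdf16, hx]

theorem integral_cdf16_of_ge (n : ℕ) (p x : Fin n → ℝ) {b : ℝ} (hx : ∀ i, x i ≤ b) (t : ℝ) :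
    ∫ τ in t..b, cdf16 n p x τ = (b - t) * ∑ i, p i - ∑ i, p i * max (x i - t) 0 := by
  rw [integral_cdf16, Finset.mul_sum, ← Finset.sum_sub_distrib, ← Finset.sum_sub_distrib]
  refine Finset.sum_congr rfl fun i _ => ?_
  have hpos := max_zero_sub_max_neg_zero_eq_self (t - x i)
  rw [neg_sub] at hpos
  rw [max_eq_left (sub_nonneg.2 (hx i))]
  linear_combination (-p i) * hpos

section IncreasingConvexOrder

variable {ι : Type*} [Fintype ι] {p x y : ι → ℝ} {r b : ℝ} {w : ℝ → ℝ}

theorem exists_interpolant_of_convexOn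
    (hhinge : ∀ c ∈ Icc r b, ∑ i, p i * max (y i - c) 0 ≤ ∑ i, p i * max (x i - c) 0)
    (hmono : MonotoneOn w (Icc r b)) (hconv : ConvexOn ℝ (Icc r b) w)
    (S : Finset ℝ) (hS : ∀ τ ∈ S, τ ∈ Icc r b) :
    ∀ m ∈ Icc r b, (∀ τ ∈ S, τ ≤ m) → ∃ R : ℝ → ℝ, ∃ σ : ℝ,
      ∑ i, p i * R (y i) ≤ ∑ i, p i * R (x i) ∧ (∀ τ ∈ S, R τ = w τ) ∧
      (∀ d, m ≤ d → R d = w m + σ * (d - m)) ∧ ∀ d ∈ Ioc m b, σ ≤ slope w m d := by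
  induction S using Finset.induction_on_max with
  | empty =>
    intro m hm _
    exact ⟨fun _ => w m, 0, le_rfl, by simp, fun d _ => by ring,
      fun d hd => hmono.slope_nonneg hm ⟨hm.1.trans hd.1.le, hd.2⟩⟩
  | insert M S hlt ih =>
    intro m hm hSm
    have hM : M ∈ Icc r b := hS M (Finset.mem_insert_self M S)
    obtain ⟨R, σ, hgood, hagree, hlin, hslope⟩ :=
      ih (fun τ hτ => hS τ (Finset.mem_insert_of_mem hτ)) M hM fun τ hτ => (hlt τ hτ).le
    have hagree' : ∀ τ ∈ insert M S, R τ = w τ := by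
      intro τ hτ
      rcases Finset.mem_insert.1 hτ with rfl | hτ
      · simpa using hlin τ le_rfl
      · exact hagree τ hτ
    rcases (hSm M (Finset.mem_insert_self M S)).eq_or_lt with rfl | hMm
    · exact ⟨R, σ, hgood, hagree', hlin, hslope⟩
    -- bend the last linear piece of `R` at `M` so that it passes through `(m, w m)`;
    -- the slope invariant makes the bend convex
    have hσs : σ ≤ slope w M m := hslope m ⟨hMm, hm.2⟩
    refine ⟨fun τ => R τ + (slope w M m - σ) * max (τ - M) 0, slope w M m, ?_,
      fun τ hτ => ?_, fun d hd => ?_, fun d hd => ?_⟩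
    · simp only [mul_add, Finset.sum_add_distrib, mul_left_comm (p _), ← Finset.mul_sum]
      exact add_le_add hgood (mul_le_mul_of_nonneg_left (hhinge M hM) (sub_nonneg.2 hσs))
    · have hτM : τ - M ≤ 0 := by
        rcases Finset.mem_insert.1 hτ with rfl | hτ
        · exact (sub_self τ).le
        · exact sub_nonpos.2 (hlt τ hτ).le
      simp [max_eq_right hτM, hagree' τ hτ]
    · have hwm : w m = w M + slope w M m * (m - M) := by
        rw [slope_def_field]; field_simp [sub_ne_zero.2 hMm.ne']; ring
      simp only [hlin d (hMm.le.trans hd), max_eq_left (sub_nonneg.2 (hMm.le.trans hd)), hwm]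
      ring
    · simpa only [slope_def_field] using
        hconv.slope_mono_adjacent hM ⟨hm.1.trans hd.1.le, hd.2⟩ hMm hd.1

theorem sum_mul_le_sum_mul_of_convexOn (hx : ∀ i, x i ∈ Icc r b) (hy : ∀ i, y i ∈ Icc r b)
    (hhinge : ∀ c ∈ Icc r b, ∑ i, p i * max (y i - c) 0 ≤ ∑ i, p i * max (x i - c) 0)
    (hmono : MonotoneOn w (Icc r b)) (hconv : ConvexOn ℝ (Icc r b) w) :
    ∑ i, p i * w (y i) ≤ ∑ i, p i * w (x i) := by
  classical
  set S := Finset.univ.image x ∪ Finset.univ.image y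
  have hS : ∀ τ ∈ S, τ ∈ Icc r b := by
    simp only [S, Finset.mem_union, Finset.mem_image, Finset.mem_univ, true_and]
    rintro τ (⟨i, rfl⟩ | ⟨i, rfl⟩) <;> simp [hx, hy]
  rcases isEmpty_or_nonempty ι with hι | ⟨⟨i₀⟩⟩
  · simp
  obtain ⟨R, -, hgood, hagree, -⟩ := exists_interpolant_of_convexOn hhinge hmono hconv S hS b
    ⟨(hx i₀).1.trans (hx i₀).2, le_rfl⟩ fun τ hτ => (hS τ hτ).2
  calc ∑ i, p i * w (y i) = ∑ i, p i * R (y i) := by simp [S, hagree]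
    _ ≤ ∑ i, p i * R (x i) := hgood
    _ = ∑ i, p i * w (x i) := by simp [S, hagree]

end IncreasingConvexOrder

theorem ConcaveOn.convexOn_neg_comp_neg {𝕜 E β : Type*} [Field 𝕜] [LinearOrder 𝕜]
    [AddCommGroup E] [Module 𝕜 E] [AddCommGroup β] [PartialOrder β] [IsOrderedAddMonoid β]
    [Module 𝕜 β] {s : Set E} {f : E → β} (hf : ConcaveOn 𝕜 s f) :
    ConvexOn 𝕜 (-s) fun x => -f (-x) :=
  hf.neg.comp_linearMap (-LinearMap.id)

section DecreasingConcaveOrder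

variable {ι : Type*} [Fintype ι] {p x y : ι → ℝ} {a r : ℝ} {w : ℝ → ℝ}

theorem sum_mul_le_sum_mul_of_concaveOn (hx : ∀ i, x i ∈ Icc a r) (hy : ∀ i, y i ∈ Icc a r)
    (hhinge : ∀ c ∈ Icc a r, ∑ i, p i * max (c - x i) 0 ≤ ∑ i, p i * max (c - y i) 0)
    (hmono : MonotoneOn w (Icc a r)) (hconc : ConcaveOn ℝ (Icc a r) w) :
    ∑ i, p i * w (y i) ≤ ∑ i, p i * w (x i) := by
  have hneg : ∀ {τ}, τ ∈ Icc (-r) (-a) → -τ ∈ Icc a r := fun h =>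
    ⟨by linarith [h.2], by linarith [h.1]⟩
  have hneg' : ∀ {τ}, τ ∈ Icc a r → -τ ∈ Icc (-r) (-a) := fun h =>
    ⟨neg_le_neg h.2, neg_le_neg h.1⟩
  have hmono' : MonotoneOn (fun τ => -w (-τ)) (Icc (-r) (-a)) :=
    fun τ₁ h₁ τ₂ h₂ h => neg_le_neg (hmono (hneg h₂) (hneg h₁) (neg_le_neg h))
  have hconv' : ConvexOn ℝ (Icc (-r) (-a)) fun τ => -w (-τ) :=
    neg_Icc a r ▸ hconc.convexOn_neg_comp_neg
  have := sum_mul_le_sum_mul_of_convexOn (p := p) (x := -y) (y := -x)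
    (fun i => hneg' (hy i)) (fun i => hneg' (hx i))
    (fun c hc => by simpa only [Pi.neg_apply, neg_sub_comm] using hhinge (-c) (hneg hc))
    hmono' hconv'
  simpa [Finset.sum_neg_distrib] using this

end DecreasingConcaveOrder

lemma max_sub_min_zero_of_le {c r : ℝ} (h : c ≤ r) (τ : ℝ) :
    max (c - min τ r) 0 = max (c - τ) 0 := by
  grind

lemma max_max_sub_zero_of_le {c r : ℝ} (h : r ≤ c) (τ : ℝ) :
    max (max τ r - c) 0 = max (τ - c) 0 := by
  grind

theorem sum_mul_le_sum_mul_of_concaveOn_of_convexOn {ι : Type*} [Fintype ι] {p x y : ι → ℝ}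
    {a r b : ℝ} {u : ℝ → ℝ} (hx : ∀ i, x i ∈ Icc a b) (hy : ∀ i, y i ∈ Icc a b)
    (hr : r ∈ Icc a b)
    (hloss : ∀ c ∈ Icc a r, ∑ i, p i * max (c - x i) 0 ≤ ∑ i, p i * max (c - y i) 0)
    (hgain : ∀ c ∈ Icc r b, ∑ i, p i * max (y i - c) 0 ≤ ∑ i, p i * max (x i - c) 0)
    (hu : MonotoneOn u (Icc a b)) (hconc : ConcaveOn ℝ (Icc a r) u)
    (hconv : ConvexOn ℝ (Icc r b) u) :
    ∑ i, p i * u (y i) ≤ ∑ i, p i * u (x i) := by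
  have hlow := sum_mul_le_sum_mul_of_concaveOn (p := p) (x := fun i => min (x i) r)
    (y := fun i => min (y i) r) (fun i => ⟨le_min (hx i).1 hr.1, min_le_right _ _⟩)
    (fun i => ⟨le_min (hy i).1 hr.1, min_le_right _ _⟩)
    (fun c hc => by simpa only [max_sub_min_zero_of_le hc.2] using hloss c hc)
    (hu.mono (Icc_subset_Icc le_rfl hr.2)) hconc
  have hhigh := sum_mul_le_sum_mul_of_convexOn (p := p) (x := fun i => max (x i) r)
    (y := fun i => max (y i) r) (fun i => ⟨le_max_right _ _, max_le (hx i).2 hr.2⟩)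
    (fun i => ⟨le_max_right _ _, max_le (hy i).2 hr.2⟩)
    (fun c hc => by simpa only [max_max_sub_zero_of_le hc.1] using hgain c hc)
    (hu.mono (Icc_subset_Icc hr.1 le_rfl)) hconv
  have hsplit (z : ι → ℝ) : ∑ i, p i * u (z i) =
      ∑ i, p i * u (max (z i) r) + ∑ i, p i * u (min (z i) r) - ∑ i, p i * u r := by
    rw [← Finset.sum_add_distrib, ← Finset.sum_sub_distrib]
    refine Finset.sum_congr rfl fun i _ => ?_
    rcases le_total (z i) r with h | h <;> simp [h]
  rw [hsplit x, hsplit y]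
  linarith

theorem stmt_16_general (n : ℕ) (p x y : Fin n → ℝ) (a b r : ℝ)
    (hx : ∀ i, x i ∈ Set.Icc a b) (hy : ∀ i, y i ∈ Set.Icc a b)
    (hr : r ∈ Set.Icc a b)
    (hgain : ∀ t ∈ Set.Icc r b, 0 ≤ ∫ τ in t..b, (cdf16 n p y τ - cdf16 n p x τ))
    (hloss : ∀ t ∈ Set.Icc a r, 0 ≤ ∫ τ in a..t, (cdf16 n p y τ - cdf16 n p x τ)) :
    ∀ u : ℝ → ℝ, MonotoneOn u (Set.Icc a b) →
      ConcaveOn ℝ (Set.Icc a r) u → ConvexOn ℝ (Set.Icc r b) u →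
      ContDiffOn ℝ 2 u (Set.Ioo a r) → ContDiffOn ℝ 2 u (Set.Ioo r b) →
      ∑ i, p i * u (y i) ≤ ∑ i, p i * u (x i) := by
  intro u hu hconc hconv _ _
  refine sum_mul_le_sum_mul_of_concaveOn_of_convexOn hx hy hr (fun c hc => ?_) (fun c hc => ?_)
    hu hconc hconv
  · have h := hloss c hc
    rw [intervalIntegral.integral_sub (intervalIntegrable_cdf16 ..) (intervalIntegrable_cdf16 ..),
      integral_cdf16_of_le n p y fun i => (hy i).1, integral_cdf16_of_le n p x fun i => (hx i).1]
      at h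
    linarith
  · have h := hgain c hc
    rw [intervalIntegral.integral_sub (intervalIntegrable_cdf16 ..) (intervalIntegrable_cdf16 ..),
      integral_cdf16_of_ge n p y fun i => (hy i).2, integral_cdf16_of_ge n p x fun i => (hx i).2]
      at h
    linarith

/-- If X ⪰ Y (the integral MSD conditions of Proposition 1 with
reference point r), then for every non-decreasing u : [a,b] → ℝ that is concave
on [a,r], convex on [r,b], and twice continuously differentiable on (a,r) and
(r,b), we have E[u(X)] ≥ E[u(Y)]. -/
theorem stmt_16 (n : ℕ) (p x y : Fin n → ℝ) (a b r : ℝ)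
    (hp : ∀ i, 0 ≤ p i) (hsum : ∑ i, p i = 1)
    (hx : ∀ i, x i ∈ Set.Icc a b) (hy : ∀ i, y i ∈ Set.Icc a b)
    (hr : r ∈ Set.Icc a b)
    (hgain : ∀ t ∈ Set.Icc r b, 0 ≤ ∫ τ in t..b, (cdf16 n p y τ - cdf16 n p x τ))
    (hloss : ∀ t ∈ Set.Icc a r, 0 ≤ ∫ τ in a..t, (cdf16 n p y τ - cdf16 n p x τ)) :
    ∀ u : ℝ → ℝ, MonotoneOn u (Set.Icc a b) →
      ConcaveOn ℝ (Set.Icc a r) u → ConvexOn ℝ (Set.Icc r b) u →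
      ContDiffOn ℝ 2 u (Set.Ioo a r) → ContDiffOn ℝ 2 u (Set.Ioo r b) →
      ∑ i, p i * u (y i) ≤ ∑ i, p i * u (x i) :=
  stmt_16_general n p x y a b r hx hy hr hgain hloss
end

section
/- MWSD implies MSD but not conversely: for any d⁻, d⁺ ∈ [0,1], if X ⪰_{d⁻}^{d⁺} Y then X ⪰ Y; moreover there exist discrete random variables X, Y on a two-point equiprobable state space and parameters d⁻ = d⁺ = 0 such that X ⪰ Y but not X ⪰_{0}^{0} Y (since d⁻ = d⁺ = 0 forces FSD on essentially the whole support interval, which MSD alone does not imply). -/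
open MeasureTheory

/-- The CDF of a discrete random variable with values `x` and probabilities `p`. -/
noncomputable def cdf19 (n : ℕ) (p x : Fin n → ℝ) (t : ℝ) : ℝ :=
  ∑ i ∈ Finset.univ.filter (fun i => x i ≤ t), p i

/-- MSD relation (Proposition 1). -/
noncomputable def MSD19 (n : ℕ) (p : Fin n → ℝ) (a b r : ℝ) (x y : Fin n → ℝ) : Prop :=
  (∀ t ∈ Set.Icc r b, 0 ≤ ∫ τ in t..b, (cdf19 n p y τ - cdf19 n p x τ)) ∧
  (∀ t ∈ Set.Icc a r, 0 ≤ ∫ τ in a..t, (cdf19 n p y τ - cdf19 n p x τ))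

/-- t_d⁻ = sup({a} ∪ {t ≤ r | F_X(t) ≤ d⁻, F_Y(t) ≤ d⁻}). -/
noncomputable def tdm19 (n : ℕ) (p x y : Fin n → ℝ) (a r d : ℝ) : ℝ :=
  sSup ({a} ∪ {t : ℝ | t ≤ r ∧ cdf19 n p x t ≤ d ∧ cdf19 n p y t ≤ d})

/-- t_d⁺ = inf({b} ∪ {t ≥ r | F_X(t) ≥ 1-d⁺, F_Y(t) ≥ 1-d⁺}). -/
noncomputable def tdp19 (n : ℕ) (p x y : Fin n → ℝ) (b r d : ℝ) : ℝ :=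
  sInf ({b} ∪ {t : ℝ | r ≤ t ∧ 1 - d ≤ cdf19 n p x t ∧ 1 - d ≤ cdf19 n p y t})

/-- MWSD with thresholds (d⁻, d⁺) (Proposition 2): MSD together with FSD on
[t_d⁻, t_d⁺). -/
noncomputable def MWSD19 (n : ℕ) (p : Fin n → ℝ) (a b r : ℝ) (x y : Fin n → ℝ)
    (dm dp : ℝ) : Prop :=
  MSD19 n p a b r x y ∧
  ∀ t ∈ Set.Ico (tdm19 n p x y a r dm) (tdp19 n p x y b r dp),
    cdf19 n p x t ≤ cdf19 n p y t

/-!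
MWSD is MSD together with first-order dominance on `[t_{d⁻}, t_{d⁺})`, so the first claim
is a projection. For the converse let `X` be uniform on `{0, 3}`, `Y` uniform on `{1, 2}`,
and `a = r = 0`, `b = 3`. Then `F_Y - F_X` is `-1/2` on `[0, 1)`, `0` on `[1, 2)` and `1/2`
on `[2, 3)`, so every tail integral `∫ τ in t..3, F_Y - F_X` is nonnegative and MSD holds
(the left-hand condition is vacuous as `a = r`). With `d⁻ = d⁺ = 0`, however, `t₀⁻ ≤ 0` and,
since `F_X < 1` before `3`, `t₀⁺ = 3`; yet `F_X (1/2) = 1/2 > 0 = F_Y (1/2)`.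
-/

open Set

theorem intervalIntegral_indicator_Ici_one (c : ℝ) {t u : ℝ} (htu : t ≤ u) :
    ∫ τ in t..u, (Ici c).indicator (1 : ℝ → ℝ) τ = max (u - max t c) 0 := by
  rw [intervalIntegral.integral_of_le htu, integral_indicator_one measurableSet_Ici,
    measureReal_restrict_apply measurableSet_Ici, inter_comm,
    measureReal_congr ((ae_eq_refl (Ioc t u)).inter Ioi_ae_eq_Ici).symm, Ioc_inter_Ioi,
    Real.volume_real_Ioc]

theorem intervalIntegrable_indicator_Ici_one (c t u : ℝ) :
    IntervalIntegrable ((Ici c).indicator (1 : ℝ → ℝ)) volume t u :=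
  ⟨(integrableOn_const measure_Ioc_lt_top.ne).indicator measurableSet_Ici,
    (integrableOn_const measure_Ioc_lt_top.ne).indicator measurableSet_Ici⟩

section Cdf

variable {n : ℕ} (p x : Fin n → ℝ)

theorem cdf19_eq_sum_indicator (t : ℝ) :
    cdf19 n p x t = ∑ i, p i * (Ici (x i)).indicator 1 t := by
  simp only [cdf19, Finset.sum_filter, indicator_apply, mem_Ici, Pi.one_apply, mul_ite,
    mul_one, mul_zero]

theorem intervalIntegrable_cdf19 (t u : ℝ) :
    IntervalIntegrable (cdf19 n p x) volume t u := by
  have hsum : cdf19 n p x = ∑ i, fun τ => p i * (Ici (x i)).indicator 1 τ := by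
    ext τ
    rw [cdf19_eq_sum_indicator, Finset.sum_apply]
  rw [hsum]
  exact IntervalIntegrable.sum _ fun i _ =>
    (intervalIntegrable_indicator_Ici_one (x i) t u).const_mul (p i)

theorem integral_cdf19 {t u : ℝ} (htu : t ≤ u) :
    ∫ τ in t..u, cdf19 n p x τ = ∑ i, p i * max (u - max t (x i)) 0 := by
  simp only [cdf19_eq_sum_indicator]
  rw [intervalIntegral.integral_finsetSum fun i _ =>
    (intervalIntegrable_indicator_Ici_one (x i) t u).const_mul (p i)]
  simp only [intervalIntegral.integral_const_mul, intervalIntegral_indicator_Ici_one _ htu]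

end Cdf

section Thresholds

variable {n : ℕ} (p x y : Fin n → ℝ)

theorem tdm19_le_max (a r d : ℝ) : tdm19 n p x y a r d ≤ max a r := by
  refine csSup_le ⟨a, Or.inl rfl⟩ ?_
  rintro s (rfl | ⟨hsr, -⟩)
  exacts [le_max_left _ _, le_max_of_le_right hsr]

theorem le_tdp19 {b r d s : ℝ} (hsb : s ≤ b) (hx : ∀ t < s, cdf19 n p x t < 1 - d) :
    s ≤ tdp19 n p x y b r d := by
  refine le_csInf ⟨b, Or.inl rfl⟩ ?_
  rintro t (rfl | ⟨-, hxt, -⟩)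
  exacts [hsb, not_lt.1 fun hts => (hx t hts).not_ge hxt]

end Thresholds

theorem cdf19_two_uniform (u v t : ℝ) :
    cdf19 2 (fun _ => 1 / 2) ![u, v] t
      = (if u ≤ t then 1 / 2 else 0) + (if v ≤ t then 1 / 2 else 0) := by
  rw [cdf19, Finset.sum_filter, Fin.sum_univ_two]
  rfl

theorem msd19_two_point : MSD19 2 (fun _ => 1 / 2) 0 3 0 ![0, 3] ![1, 2] := by
  refine ⟨fun t ht => ?_, fun t ht => ?_⟩
  · rw [intervalIntegral.integral_sub (intervalIntegrable_cdf19 _ _ t 3)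
      (intervalIntegrable_cdf19 _ _ t 3), integral_cdf19 _ _ ht.2, integral_cdf19 _ _ ht.2]
    simp only [Fin.sum_univ_two, Matrix.cons_val_zero, Matrix.cons_val_one,
      Matrix.cons_val_fin_one]
    grind [ht.1, ht.2]
  · rw [le_antisymm ht.2 ht.1, intervalIntegral.integral_same]

theorem not_mwsd19_two_point : ¬ MWSD19 2 (fun _ => 1 / 2) 0 3 0 ![0, 3] ![1, 2] 0 0 := by
  rintro ⟨-, hfsd⟩
  have hmem : (1 / 2 : ℝ) ∈ Ico (tdm19 2 (fun _ => 1 / 2) ![0, 3] ![1, 2] 0 0 0)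
      (tdp19 2 (fun _ => 1 / 2) ![0, 3] ![1, 2] 3 0 0) := by
    refine ⟨(tdm19_le_max _ _ _ _ _ _).trans (by norm_num), ?_⟩
    refine lt_of_lt_of_le (by norm_num) (le_tdp19 _ _ _ le_rfl fun t ht => ?_)
    rw [cdf19_two_uniform, if_neg ht.not_ge, add_zero]
    split <;> norm_num
  have hfsd_half := hfsd _ hmem
  rw [cdf19_two_uniform, cdf19_two_uniform] at hfsd_half
  norm_num at hfsd_half

/-- MWSD implies MSD; but the converse fails: there are discrete
random variables X, Y on a two-point equiprobable state space with X ⪰ Y (MSD)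
but not X ⪰₀⁰ Y (MWSD with d⁻ = d⁺ = 0). -/
theorem stmt_19 :
    (∀ (n : ℕ) (p x y : Fin n → ℝ) (a b r dm dp : ℝ),
        dm ∈ Set.Icc (0:ℝ) 1 → dp ∈ Set.Icc (0:ℝ) 1 →
        MWSD19 n p a b r x y dm dp → MSD19 n p a b r x y) ∧
    (∃ (x y : Fin 2 → ℝ) (a b r : ℝ),
        (∀ i, x i ∈ Set.Icc a b) ∧ (∀ i, y i ∈ Set.Icc a b) ∧ r ∈ Set.Icc a b ∧
        MSD19 2 (fun _ => (1:ℝ)/2) a b r x y ∧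
        ¬ MWSD19 2 (fun _ => (1:ℝ)/2) a b r x y 0 0) := by
  refine ⟨fun n p x y a b r dm dp _ _ h => h.1,
    ![0, 3], ![1, 2], 0, 3, 0, ?_, ?_, ?_, msd19_two_point, not_mwsd19_two_point⟩
  all_goals norm_num [Fin.forall_fin_two]
end
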